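/- Let ε₁,...,εₙ be elements of a finite set 𝒜 ⊂ ℝ, π a uniform random permutation of {1,...,n}, d ≥ 0, and define W_{k,d} = (1/n) Σ_{i=1}^k Σ_{j=k+1}^n (ε_{π(i)} − ε_{π(j)}) 1(|ε_{π(i)} − ε_{π(j)}| = d). Then for all θ ∈ ℝ and 1 ≤ k ≤ n, E[exp(θ W_{k,d}/√k)] ≤ exp(d² θ²/2). -/

import Mathlib

/-! Stein's method of exchangeable pairs. Write `G(π) = ∑_{i ∈ A, j ∈ B} g(π i, π j)` with `g`
antisymmetric and `|g| ≤ |d|`, `A = {i < k}`, `B = {i ≥ k}`. Composing `π` with a transposition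
`(i j)`, `i ∈ A`, `j ∈ B`, gives `∑_{i,j} (G(π) - G(π (i j))) = n G(π)` and
`∑_{i,j} (G(π) - G(π (i j)))² ≤ 2 n³ k d²`. Averaging over the involution `π ↦ π (i j)` and using
`|e^x - e^y| ≤ |x - y| (e^x + e^y) / 2`, the moment generating function `m` of `W = G / (n √k)`
satisfies `|m'(t)| ≤ d² |t| m(t)`, and integrating this gives `m(θ) ≤ m(0) exp(d² θ² / 2)`. -/

open Finset Equiv

section

open Real

theorem Real.abs_sinh_le_abs_mul_cosh (u : ℝ) : |sinh u| ≤ |u| * cosh u := by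
  have hmono : Monotone fun v => v * cosh v - sinh v := by
    refine monotone_of_deriv_nonneg (by fun_prop) fun v => ?_
    have hderiv : HasDerivAt (fun v => v * cosh v - sinh v) (v * sinh v) v := by
      refine (((hasDerivAt_id' v).fun_mul (hasDerivAt_cosh v)).fun_sub
        (hasDerivAt_sinh v)).congr_deriv ?_
      ring
    rw [hderiv.deriv]
    rcases le_total 0 v with hv | hv
    · exact mul_nonneg hv (sinh_nonneg_iff.mpr hv)
    · exact mul_nonneg_of_nonpos_of_nonpos hv (sinh_nonpos_iff.mpr hv)
  have := hmono (abs_nonneg u)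
  simp only [zero_mul, sinh_zero, sub_zero, cosh_abs] at this
  rw [abs_sinh]
  linarith

theorem Real.abs_exp_sub_exp_le (x y : ℝ) :
    |exp x - exp y| ≤ |x - y| * (exp x + exp y) / 2 := by
  set u := (x - y) / 2
  have hx : exp x = exp ((x + y) / 2) * exp u := by rw [← exp_add]; congr 1; ring
  have hy : exp y = exp ((x + y) / 2) * exp (-u) := by rw [← exp_add]; congr 1; ring
  have hxy : |x - y| = 2 * |u| := by simp only [u, abs_div, abs_two]; ring
  calc |exp x - exp y| = exp ((x + y) / 2) * (2 * |sinh u|) := by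
        rw [hx, hy, sinh_eq, abs_div, abs_two, ← mul_sub, abs_mul, abs_of_pos (exp_pos _)]
        ring
    _ ≤ exp ((x + y) / 2) * (2 * (|u| * cosh u)) := by
        gcongr; exact abs_sinh_le_abs_mul_cosh u
    _ = |x - y| * (exp x + exp y) / 2 := by rw [hxy, hx, hy, cosh_eq]; ring

theorem le_mul_exp_sq_of_deriv_le {f f' : ℝ → ℝ} {C θ : ℝ}
    (hf : ∀ t, HasDerivAt f (f' t) t) (hbound : ∀ t, 0 ≤ t → f' t ≤ C * t * f t)
    (hθ : 0 ≤ θ) : f θ ≤ f 0 * exp (C * θ ^ 2 / 2) := by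
  set φ := fun t => f t * exp (-(C * t ^ 2 / 2))
  have hφ : ∀ t, HasDerivAt φ ((f' t - C * t * f t) * exp (-(C * t ^ 2 / 2))) t := by
    intro t
    have hE := ((((hasDerivAt_pow 2 t).const_mul C).div_const 2).fun_neg).exp
    refine ((hf t).fun_mul hE).congr_deriv ?_
    push_cast; ring
  have hanti : AntitoneOn φ (Set.Ici 0) := by
    refine antitoneOn_of_deriv_nonpos (convex_Ici 0)
      (fun t _ => (hφ t).continuousAt.continuousWithinAt)
      (fun t _ => (hφ t).differentiableAt.differentiableWithinAt) fun t ht => ?_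
    rw [interior_Ici, Set.mem_Ioi] at ht
    rw [(hφ t).deriv]
    exact mul_nonpos_of_nonpos_of_nonneg (by linarith [hbound t ht.le]) (exp_pos _).le
  calc f θ = φ θ * exp (C * θ ^ 2 / 2) := by simp only [φ, mul_assoc, ← exp_add]; simp
    _ ≤ φ 0 * exp (C * θ ^ 2 / 2) := by gcongr; exact hanti Set.self_mem_Ici hθ hθ
    _ = f 0 * exp (C * θ ^ 2 / 2) := by simp [φ]

theorem le_mul_exp_sq_of_abs_deriv_le {f f' : ℝ → ℝ} {C : ℝ}
    (hf : ∀ t, HasDerivAt f (f' t) t) (hbound : ∀ t, |f' t| ≤ C * |t| * f t) (θ : ℝ) :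
    f θ ≤ f 0 * exp (C * θ ^ 2 / 2) := by
  rcases le_total 0 θ with hθ | hθ
  · refine le_mul_exp_sq_of_deriv_le hf (fun t ht => ?_) hθ
    simpa [abs_of_nonneg ht] using (le_abs_self _).trans (hbound t)
  · have hneg : ∀ t, HasDerivAt (fun t => f (-t)) (-f' (-t)) t := fun t => by
      simpa only [zero_sub] using (hf (0 - t)).comp_const_sub 0 t
    have := le_mul_exp_sq_of_deriv_le (C := C) hneg (fun t ht => ?_) (neg_nonneg.mpr hθ)
    · simpa using this
    · simpa [abs_of_nonneg ht] using (neg_le_abs _).trans (hbound (-t))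

theorem sum_exp_le_card_mul_exp {T : Type*} [Fintype T] (W : T → ℝ) {C : ℝ}
    (hbound : ∀ t, |∑ x, W x * exp (t * W x)| ≤ C * |t| * ∑ x, exp (t * W x)) (θ : ℝ) :
    ∑ x, exp (θ * W x) ≤ Fintype.card T * exp (C * θ ^ 2 / 2) := by
  have hderiv : ∀ t, HasDerivAt (fun t => ∑ x, exp (t * W x)) (∑ x, W x * exp (t * W x)) t :=
    fun t => HasDerivAt.fun_sum fun x _ => by
      simpa [mul_comm] using ((hasDerivAt_id t).mul_const (W x)).exp
  simpa using le_mul_exp_sq_of_abs_deriv_le hderiv hbound θ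

namespace Function.Involutive

variable {T : Type*} [Fintype T] {σ : T → T}

theorem sum_apply_comm {M : Type*} [AddCommMonoid M] (hσ : Involutive σ) (F : T → T → M) :
    ∑ x, F (σ x) x = ∑ x, F x (σ x) := by
  calc ∑ x, F (σ x) x = ∑ x, F (σ x) (σ (σ x)) := by simp only [hσ _]
    _ = ∑ x, F x (σ x) := Equiv.sum_comp (hσ.toPerm σ) fun y => F y (σ y)

theorem sum_sub_mul (hσ : Involutive σ) (a b : T → ℝ) :
    ∑ x, (a x - a (σ x)) * b x = (∑ x, (a x - a (σ x)) * (b x - b (σ x))) / 2 := by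
  have hanti : ∑ x, (a x - a (σ x)) * b (σ x) = -∑ x, (a x - a (σ x)) * b x := by
    rw [hσ.sum_apply_comm (fun y x => (a x - a y) * b y), ← sum_neg_distrib]
    simp only [neg_sub, sub_mul]
  simp only [mul_sub, sum_sub_distrib, hanti]
  ring

theorem abs_sum_sub_mul_exp_le (hσ : Involutive σ) (W : T → ℝ) (t : ℝ) :
    |∑ x, (W x - W (σ x)) * exp (t * W x)|
      ≤ |t| / 2 * ∑ x, (W x - W (σ x)) ^ 2 * exp (t * W x) := by
  have hpair : ∀ x, |(W x - W (σ x)) * (exp (t * W x) - exp (t * W (σ x)))|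
      ≤ |t| / 2 * ((W x - W (σ x)) ^ 2 * exp (t * W x))
        + |t| / 2 * ((W x - W (σ x)) ^ 2 * exp (t * W (σ x))) := fun x => by
    rw [abs_mul]
    calc |W x - W (σ x)| * |exp (t * W x) - exp (t * W (σ x))|
        ≤ |W x - W (σ x)|
            * (|t * W x - t * W (σ x)| * (exp (t * W x) + exp (t * W (σ x))) / 2) :=
          mul_le_mul_of_nonneg_left (abs_exp_sub_exp_le _ _) (abs_nonneg _)
      _ = _ := by rw [← mul_sub, abs_mul, ← sq_abs (W x - W (σ x))]; ring
  have hswap : ∑ x, (W x - W (σ x)) ^ 2 * exp (t * W (σ x))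
      = ∑ x, (W x - W (σ x)) ^ 2 * exp (t * W x) := by
    rw [hσ.sum_apply_comm (fun y x => (W x - W y) ^ 2 * exp (t * W y))]
    congr 1; ext x; ring
  rw [hσ.sum_sub_mul, abs_div, abs_two]
  calc |∑ x, (W x - W (σ x)) * (exp (t * W x) - exp (t * W (σ x)))| / 2
      ≤ (∑ x, (|t| / 2 * ((W x - W (σ x)) ^ 2 * exp (t * W x))
        + |t| / 2 * ((W x - W (σ x)) ^ 2 * exp (t * W (σ x))))) / 2 := by
        gcongr
        exact (abs_sum_le_sum_abs _ _).trans (sum_le_sum fun x _ => hpair x)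
    _ = _ := by rw [sum_add_distrib, ← mul_sum, ← mul_sum, hswap]; ring

end Function.Involutive

theorem abs_sum_mul_exp_le_of_exchangeable {T ι : Type*} [Fintype T] (P : Finset ι)
    (σ : ι → T → T) (hσ : ∀ p ∈ P, Function.Involutive (σ p)) (W : T → ℝ) {c K : ℝ}
    (hc : 0 < c) (hlin : ∀ x, ∑ p ∈ P, (W x - W (σ p x)) = c * W x)
    (hsq : ∀ x, ∑ p ∈ P, (W x - W (σ p x)) ^ 2 ≤ 2 * c * K) (t : ℝ) :
    |∑ x, W x * exp (t * W x)| ≤ K * |t| * ∑ x, exp (t * W x) := by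
  refine le_of_mul_le_mul_left ?_ hc
  calc c * |∑ x, W x * exp (t * W x)|
      = |∑ p ∈ P, ∑ x, (W x - W (σ p x)) * exp (t * W x)| := by
        simp only [sum_comm (s := P), ← sum_mul, hlin, mul_assoc, ← mul_sum, abs_mul,
          abs_of_pos hc]
    _ ≤ ∑ p ∈ P, |t| / 2 * ∑ x, (W x - W (σ p x)) ^ 2 * exp (t * W x) :=
        (abs_sum_le_sum_abs _ _).trans
          (sum_le_sum fun p hp => (hσ p hp).abs_sum_sub_mul_exp_le W t)
    _ = |t| / 2 * ∑ x, (∑ p ∈ P, (W x - W (σ p x)) ^ 2) * exp (t * W x) := by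
        rw [← mul_sum, sum_comm]; simp only [sum_mul]
    _ ≤ |t| / 2 * ∑ x, 2 * c * K * exp (t * W x) := by
        gcongr with x; exact hsq x
    _ = c * (K * |t| * ∑ x, exp (t * W x)) := by rw [← mul_sum]; ring

end

theorem Finset.sum_swap_apply {α M : Type*} [DecidableEq α] [AddCommGroup M] {A : Finset α}
    {i j : α} (hi : i ∈ A) (hj : j ∉ A) (F : α → M) :
    ∑ a ∈ A, F (swap i j a) = ∑ a ∈ A, F a - F i + F j := by
  have hfix : ∀ a ∈ A.erase i, F (swap i j a) = F a := fun a ha =>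
    congrArg F <| swap_apply_of_ne_of_ne (ne_of_mem_erase ha)
      (ne_of_mem_of_not_mem (mem_of_mem_erase ha) hj)
  rw [← add_sum_erase A _ hi, ← add_sum_erase A F hi, swap_apply_left, sum_congr rfl hfix]
  abel

theorem Finset.abs_sum_le_card_mul {ι : Type*} (s : Finset ι) {g : ι → ℝ} {D : ℝ}
    (hg : ∀ i, |g i| ≤ D) : |∑ i ∈ s, g i| ≤ #s * D := by
  simpa using (abs_sum_le_sum_abs g s).trans (sum_le_card_nsmul s _ D fun i _ => hg i)

theorem Finset.sum_sum_sub {ι : Type*} (A B : Finset ι) (φ : ι → ℝ) :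
    ∑ i ∈ A, ∑ j ∈ B, (φ i - φ j) = #B * ∑ i ∈ A, φ i - #A * ∑ j ∈ B, φ j := by
  simp only [sum_sub_distrib, sum_const, nsmul_eq_mul, mul_sum]

theorem Finset.sum_sum_sub_sq {ι : Type*} (A B : Finset ι) (φ : ι → ℝ) :
    ∑ i ∈ A, ∑ j ∈ B, (φ i - φ j) ^ 2
      = #B * ∑ i ∈ A, φ i ^ 2 + #A * ∑ j ∈ B, φ j ^ 2
        - 2 * (∑ i ∈ A, φ i) * ∑ j ∈ B, φ j := by
  simp only [sub_sq, sum_add_distrib, sum_sub_distrib, sum_const, nsmul_eq_mul, mul_sum, sum_mul]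
  rw [sum_comm (s := A) (t := B)]
  ring

section CrossSum

variable {α : Type*} (A B : Finset α) (f : α → α → ℝ)

def crossSum : ℝ := ∑ a ∈ A, ∑ b ∈ B, f a b

def crossFlow (x : α) : ℝ := ∑ b ∈ B, f x b - ∑ a ∈ A, f a x

variable {A B f}

theorem sum_sum_eq_zero_of_antisymm (S : Finset α) (hf : ∀ a b, f b a = -f a b) :
    ∑ a ∈ S, ∑ b ∈ S, f a b = 0 := by
  have h : ∑ a ∈ S, ∑ b ∈ S, f a b = -∑ a ∈ S, ∑ b ∈ S, f a b := by
    conv_lhs => rw [sum_comm]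
    simp only [← sum_neg_distrib]
    exact sum_congr rfl fun a _ => sum_congr rfl fun b _ => hf a b
  linarith

theorem sum_crossFlow_left (hf : ∀ a b, f b a = -f a b) :
    ∑ x ∈ A, crossFlow A B f x = crossSum A B f := by
  simp only [crossFlow, sum_sub_distrib]
  rw [sum_comm (s := A) (t := A), sum_sum_eq_zero_of_antisymm A hf, sub_zero, crossSum]

theorem sum_crossFlow_right (hf : ∀ a b, f b a = -f a b) :
    ∑ x ∈ B, crossFlow A B f x = -crossSum A B f := by
  simp only [crossFlow, sum_sub_distrib]
  rw [sum_sum_eq_zero_of_antisymm B hf, zero_sub, sum_comm, crossSum]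

theorem crossSum_sub_crossSum_swap [DecidableEq α] (hAB : Disjoint A B)
    (hf : ∀ a b, f b a = -f a b) {i j : α} (hi : i ∈ A) (hj : j ∈ B) :
    crossSum A B f - crossSum A B (fun a b => f (swap i j a) (swap i j b))
      = crossFlow A B f i - crossFlow A B f j := by
  have hjA : j ∉ A := disjoint_right.mp hAB hj
  have hiB : i ∉ B := disjoint_left.mp hAB hi
  have hinner : ∀ x, ∑ b ∈ B, f x (swap i j b) = ∑ b ∈ B, f x b - f x j + f x i := fun x => by
    rw [swap_comm]; exact sum_swap_apply hj hiB (f x)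
  have hii : f i i = 0 := by linarith [hf i i]
  have hjj : f j j = 0 := by linarith [hf j j]
  simp only [crossSum, crossFlow, hinner]
  rw [sum_swap_apply hi hjA (fun x => ∑ b ∈ B, f x b - f x j + f x i)]
  simp only [sum_add_distrib, sum_sub_distrib, hii, hjj, hf j i]
  ring

theorem sum_sum_crossSum_sub_swap [DecidableEq α] (hAB : Disjoint A B)
    (hf : ∀ a b, f b a = -f a b) :
    ∑ i ∈ A, ∑ j ∈ B,
        (crossSum A B f - crossSum A B (fun a b => f (swap i j a) (swap i j b)))
      = (#A + #B) * crossSum A B f := by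
  rw [sum_congr rfl fun i hi => sum_congr rfl fun j hj =>
      crossSum_sub_crossSum_swap hAB hf hi hj,
    sum_sum_sub, sum_crossFlow_left hf, sum_crossFlow_right hf]
  ring

theorem abs_crossFlow_le {D : ℝ} (hD : ∀ a b, |f a b| ≤ D) (x : α) :
    |crossFlow A B f x| ≤ (#A + #B) * D := by
  refine (abs_sub _ _).trans ?_
  linarith [abs_sum_le_card_mul B (hD x), abs_sum_le_card_mul A (hD · x)]

theorem abs_crossSum_le {D : ℝ} (hD : ∀ a b, |f a b| ≤ D) :
    |crossSum A B f| ≤ #A * (#B * D) :=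
  abs_sum_le_card_mul A fun a => abs_sum_le_card_mul B (hD a)

theorem sum_sum_sq_crossSum_sub_swap_le [DecidableEq α] (hAB : Disjoint A B)
    (hf : ∀ a b, f b a = -f a b) {D : ℝ} (hD : ∀ a b, |f a b| ≤ D) :
    ∑ i ∈ A, ∑ j ∈ B,
        (crossSum A B f - crossSum A B (fun a b => f (swap i j a) (swap i j b))) ^ 2
      ≤ 2 * (#A + #B) ^ 3 * #A * D ^ 2 := by
  have hflow : ∀ x, crossFlow A B f x ^ 2 ≤ ((#A + #B) * D) ^ 2 := fun x =>
    sq_le_sq' (abs_le.mp (abs_crossFlow_le hD x)).1 (abs_le.mp (abs_crossFlow_le hD x)).2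
  have hsum : ∀ S : Finset α, ∑ x ∈ S, crossFlow A B f x ^ 2 ≤ #S * ((#A + #B) * D) ^ 2 :=
    fun S => by simpa using sum_le_card_nsmul S _ _ fun x _ => hflow x
  have hG : crossSum A B f ^ 2 ≤ (#A * (#B * D)) ^ 2 :=
    sq_le_sq' (abs_le.mp (abs_crossSum_le hD)).1 (abs_le.mp (abs_crossSum_le hD)).2
  rw [sum_congr rfl fun i hi => sum_congr rfl fun j hj => by
      rw [crossSum_sub_crossSum_swap hAB hf hi hj],
    sum_sum_sub_sq, sum_crossFlow_left hf, sum_crossFlow_right hf]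
  have hA := hsum A
  have hB := hsum B
  have ha : (0 : ℝ) ≤ #A := Nat.cast_nonneg _
  have hb : (0 : ℝ) ≤ #B := Nat.cast_nonneg _
  -- the slack is `2 #A³ D² (#A + 2 #B)`
  nlinarith [mul_le_mul_of_nonneg_left hA hb, mul_le_mul_of_nonneg_left hB ha,
    mul_nonneg (mul_nonneg (pow_nonneg ha 3) (sq_nonneg D))
      (by linarith : (0 : ℝ) ≤ #A + 2 * #B)]

end CrossSum

section Permutation

variable {α : Type*} [Fintype α] [DecidableEq α]

/-- With `#A = k` and `#A + #B = n` this is the paper's `W_{k,d}(π) / √k`. -/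
noncomputable def scaledCrossSum (A B : Finset α) (g : α → α → ℝ) (π : Perm α) : ℝ :=
  crossSum A B (fun a b => g (π a) (π b)) / ((#A + #B) * √(#A : ℝ))

theorem abs_sum_mul_exp_scaledCrossSum_le {A B : Finset α} (hAB : Disjoint A B)
    (hA : A.Nonempty) {g : α → α → ℝ} (hg : ∀ a b, g b a = -g a b) {D : ℝ}
    (hD : ∀ a b, |g a b| ≤ D) (t : ℝ) :
    |∑ π, scaledCrossSum A B g π * Real.exp (t * scaledCrossSum A B g π)|
      ≤ D ^ 2 * |t| * ∑ π, Real.exp (t * scaledCrossSum A B g π) := by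
  have hA0 : (0 : ℝ) < #A := by exact_mod_cast hA.card_pos
  have hN : (0 : ℝ) < #A + #B := add_pos_of_pos_of_nonneg hA0 (Nat.cast_nonneg _)
  have hc2 : ((#A + #B) * √(#A : ℝ)) ^ 2 = (#A + #B) ^ 2 * #A := by
    rw [mul_pow, Real.sq_sqrt hA0.le]
  refine abs_sum_mul_exp_le_of_exchangeable (A ×ˢ B) (fun p π => π * swap p.1 p.2)
    (fun p _ π => by simp only [mul_assoc, swap_mul_self, mul_one]) _ hN (fun π => ?_)
    (fun π => ?_) t
  all_goals
    have hf : ∀ a b, g (π b) (π a) = -g (π a) (π b) := fun a b => hg _ _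
    simp only [sum_product, scaledCrossSum, Perm.mul_apply, ← sub_div]
  · simp only [← sum_div]
    rw [sum_sum_crossSum_sub_swap hAB hf, mul_div_assoc]
  · simp only [div_pow, ← sum_div]
    rw [hc2, div_le_iff₀ (mul_pos (pow_pos hN 2) hA0)]
    calc _ ≤ 2 * (#A + #B) ^ 3 * #A * D ^ 2 :=
          sum_sum_sq_crossSum_sub_swap_le hAB hf fun a b => hD _ _
      _ = _ := by ring

end Permutation

theorem mgf_Wkd_bound_general (n : ℕ) (ε : Fin n → ℝ) (d : ℝ)
    (θ : ℝ) (k : ℕ) (hk1 : 1 ≤ k) (hkn : k ≤ n) :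
    (∑ π : Equiv.Perm (Fin n), Real.exp (θ * ((1 / n : ℝ) *
        ∑ i ∈ Finset.univ.filter (fun i : Fin n => (i : ℕ) < k),
          ∑ j ∈ Finset.univ.filter (fun j : Fin n => k ≤ (j : ℕ)),
            (if |ε (π i) - ε (π j)| = d then ε (π i) - ε (π j) else 0)) / Real.sqrt k))
        / (Nat.factorial n : ℝ)
      ≤ Real.exp (d ^ 2 * θ ^ 2 / 2) := by
  classical
  set A := univ.filter fun i : Fin n => (i : ℕ) < k
  set B := univ.filter fun j : Fin n => k ≤ (j : ℕ)
  set g : Fin n → Fin n → ℝ := fun a b => if |ε a - ε b| = d then ε a - ε b else 0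
  have hAB : Disjoint A B := disjoint_filter.mpr fun i _ h => by omega
  have hA : #A = k := by simp [A, Fin.card_filter_val_lt, hkn]
  have hN : #A + #B = n := by
    simpa [B, not_lt] using
      card_filter_add_card_filter_not (s := univ) fun i : Fin n => (i : ℕ) < k
  have hg : ∀ a b, g b a = -g a b := fun a b => by
    simp only [g]; rw [abs_sub_comm (ε b)]; split_ifs <;> simp
  have hgd : ∀ a b, |g a b| ≤ |d| := fun a b => by
    simp only [g]; split_ifs with h
    · exact h ▸ le_abs_self d
    · simp
  have hAne : A.Nonempty := ⟨⟨0, by omega⟩, by simp [A]; omega⟩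
  have hmgf := sum_exp_le_card_mul_exp _ (abs_sum_mul_exp_scaledCrossSum_le hAB hAne hg hgd) θ
  rw [Fintype.card_perm, Fintype.card_fin, sq_abs] at hmgf
  rw [div_le_iff₀ (by positivity), mul_comm]
  refine (le_of_eq (sum_congr rfl fun π _ => ?_)).trans hmgf
  simp only [scaledCrossSum, crossSum, g]
  rw [← Nat.cast_add, hN, hA]
  congr 1
  ring

/-- For `ε₁,...,εₙ` in a finite set `𝒜 ⊂ ℝ`, `d ≥ 0`, a uniform random permutation `π`, and
`W_{k,d} = (1/n) Σ_{i ≤ k} Σ_{j > k} (ε_{π(i)} − ε_{π(j)}) 1(|ε_{π(i)} − ε_{π(j)}| = d)`,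
one has `E[exp(θ W_{k,d}/√k)] ≤ exp(d² θ²/2)` for all `θ ∈ ℝ` and `1 ≤ k ≤ n`. -/
theorem mgf_Wkd_bound (n : ℕ) (hn : 0 < n) (𝒜 : Finset ℝ)
    (ε : Fin n → ℝ) (hε : ∀ i, ε i ∈ 𝒜) (d : ℝ) (hd : 0 ≤ d)
    (θ : ℝ) (k : ℕ) (hk1 : 1 ≤ k) (hkn : k ≤ n) :
    (∑ π : Equiv.Perm (Fin n), Real.exp (θ * ((1 / n : ℝ) *
        ∑ i ∈ Finset.univ.filter (fun i : Fin n => (i : ℕ) < k),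
          ∑ j ∈ Finset.univ.filter (fun j : Fin n => k ≤ (j : ℕ)),
            (if |ε (π i) - ε (π j)| = d then ε (π i) - ε (π j) else 0)) / Real.sqrt k))
        / (Nat.factorial n : ℝ)
      ≤ Real.exp (d ^ 2 * θ ^ 2 / 2) :=
  mgf_Wkd_bound_general n ε d θ k hk1 hkn
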